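/- arXiv:2409.16419 — 2 statements merged into one kernel-verified Lean document; each statement's English description precedes it below -/
import Mathlib

section
/- Let n ≥ 1 be a natural number and let b, c, Λ, ε, t be real numbers with 0 < c ≤ b, Λ > 0 and 0 < ε < Λ/2. Let κ : Fin n → ℝ satisfy ∑ᵢ κᵢ = 0 and ∑ᵢ κᵢ² ≤ Λ². Assume |t| ≤ (1/√b) · arctan(√c · ε / Λ²). Then for every i the denominator 1 − (1/√b) · tan(√b · t) · κᵢ is positive, and ∑ᵢ (κᵢ + √b · tan(√b · t)) / (1 − (1/√b) · tan(√b · t) · κᵢ) ≤ (ε / (√b − √c · ε/Λ)) · (1 + b·n/Λ²) · √c. -/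
open Real in
/-- Analytic core of Lemma 3.2.1: upper bound for the mean curvature of the
parallel hypersurface at distance `t`. -/
theorem mean_curvature_parallel_upper_bound
    (n : ℕ) (hn : 1 ≤ n) (b c Λ ε t : ℝ)
    (hc : 0 < c) (hcb : c ≤ b) (hΛ : 0 < Λ) (hε0 : 0 < ε) (hεΛ : ε < Λ / 2)
    (κ : Fin n → ℝ) (hsum : ∑ i, κ i = 0) (hsq : ∑ i, (κ i) ^ 2 ≤ Λ ^ 2)
    (ht : |t| ≤ (1 / Real.sqrt b) * Real.arctan (Real.sqrt c * ε / Λ ^ 2)) :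
    (∀ i, 0 < 1 - (1 / Real.sqrt b) * Real.tan (Real.sqrt b * t) * κ i) ∧
      ∑ i, (κ i + Real.sqrt b * Real.tan (Real.sqrt b * t)) /
          (1 - (1 / Real.sqrt b) * Real.tan (Real.sqrt b * t) * κ i) ≤
        (ε / (Real.sqrt b - Real.sqrt c * ε / Λ)) * (1 + b * n / Λ ^ 2) * Real.sqrt c := by
  have hb : 0 < b := hc.trans_le hcb
  set s := Real.sqrt b with hsdef
  have hs0 : 0 < s := Real.sqrt_pos.mpr hb
  have hsq_b : s ^ 2 = b := Real.sq_sqrt hb.le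
  have hsc0 : 0 < Real.sqrt c := Real.sqrt_pos.mpr hc
  have hscs : Real.sqrt c ≤ s := Real.sqrt_le_sqrt hcb
  set A := Real.sqrt c * ε / Λ ^ 2 with hAdef
  have hA0 : 0 < A := by positivity
  -- |s*t| ≤ arctan A
  have hst : |s * t| ≤ Real.arctan A := by
    rw [abs_mul, abs_of_pos hs0]
    calc s * |t| ≤ s * (1 / s * Real.arctan A) :=
          mul_le_mul_of_nonneg_left ht hs0.le
      _ = Real.arctan A := by field_simp
  set T := Real.tan (s * t) with hTdef
  -- |T| ≤ A
  have htan : |T| ≤ A := by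
    rcases abs_le.mp hst with ⟨h1, h2⟩
    have hmem1 : s * t ∈ Set.Ioo (-(π / 2)) (π / 2) := by
      constructor
      · linarith [Real.neg_pi_div_two_lt_arctan A, neg_le_neg (le_of_eq (rfl : Real.arctan A = Real.arctan A)), h1,
          (Real.arctan_lt_pi_div_two A)]
      · linarith [Real.arctan_lt_pi_div_two A]
    have hmemA : Real.arctan A ∈ Set.Ioo (-(π / 2)) (π / 2) :=
      ⟨Real.neg_pi_div_two_lt_arctan A, Real.arctan_lt_pi_div_two A⟩
    have hmemA' : Real.arctan (-A) ∈ Set.Ioo (-(π / 2)) (π / 2) :=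
      ⟨Real.neg_pi_div_two_lt_arctan _, Real.arctan_lt_pi_div_two _⟩
    have hub : T ≤ A := by
      have := Real.strictMonoOn_tan.monotoneOn hmem1 hmemA h2
      rwa [Real.tan_arctan] at this
    have hlb : -A ≤ T := by
      have h1' : Real.arctan (-A) ≤ s * t := by rw [Real.arctan_neg]; linarith
      have := Real.strictMonoOn_tan.monotoneOn hmemA' hmem1 h1'
      rwa [Real.tan_arctan] at this
    exact abs_le.mpr ⟨hlb, hub⟩
  set u := 1 / s * T with hudef
  have hu_abs : |u| ≤ A / s := by
    rw [hudef, abs_mul, abs_of_pos (by positivity : (0:ℝ) < 1 / s)]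
    rw [div_eq_mul_inv A s, mul_comm A s⁻¹, ← one_div]
    exact mul_le_mul_of_nonneg_left htan (by positivity)
  -- each |κ i| ≤ Λ
  have hκ : ∀ i, |κ i| ≤ Λ := by
    intro i
    have h1 : (κ i) ^ 2 ≤ Λ ^ 2 := by
      refine le_trans ?_ hsq
      exact Finset.single_le_sum (fun j _ => sq_nonneg (κ j)) (Finset.mem_univ i)
    have := Real.sqrt_le_sqrt h1
    rwa [Real.sqrt_sq_eq_abs, Real.sqrt_sq hΛ.le] at this
  -- denominator lower bound
  set d₀ := 1 - Real.sqrt c * ε / (s * Λ) with hd₀def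
  have hd₀pos : 0 < d₀ := by
    have h1 : Real.sqrt c * ε / (s * Λ) ≤ ε / Λ := by
      rw [div_le_div_iff₀ (by positivity) hΛ]
      calc Real.sqrt c * ε * Λ ≤ s * ε * Λ := by
            have := mul_le_mul_of_nonneg_right (mul_le_mul_of_nonneg_right hscs hε0.le) hΛ.le
            linarith
        _ = ε * (s * Λ) := by ring
    have h2 : ε / Λ < 1 / 2 := by
      rw [div_lt_div_iff₀ hΛ (by norm_num)]; linarith
    rw [hd₀def]; linarith
  have hden : ∀ i, d₀ ≤ 1 - u * κ i := by
    intro i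
    have h1 : |u * κ i| ≤ A / s * Λ := by
      rw [abs_mul]
      exact mul_le_mul hu_abs (hκ i) (abs_nonneg _) (by positivity)
    have h2 : A / s * Λ = Real.sqrt c * ε / (s * Λ) := by
      rw [hAdef]; field_simp
    have := (abs_le.mp h1).2
    rw [h2] at this
    rw [hd₀def]; linarith
  have hdenpos : ∀ i, 0 < 1 - u * κ i := fun i => hd₀pos.trans_le (hden i)
  refine ⟨fun i => by simpa [hudef, mul_assoc] using hdenpos i, ?_⟩
  have hbu : b * u = s * T := by
    rw [hudef, ← hsq_b]; field_simp
  -- key identity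
  have hterm : ∀ i, (κ i + s * T) / (1 - u * κ i)
      = u * ((κ i) ^ 2 + b) / (1 - u * κ i) + κ i := by
    intro i
    have hd : (1 - u * κ i) ≠ 0 := (hdenpos i).ne'
    have hnum : κ i + s * T = u * ((κ i) ^ 2 + b) + κ i * (1 - u * κ i) := by
      linear_combination (-1 : ℝ) * hbu
    rw [hnum, add_div, mul_div_assoc (κ i) (1 - u * κ i) (1 - u * κ i),
      div_self hd, mul_one]
  have hrw : ∀ i, (1 : ℝ) - 1 / s * T * κ i = 1 - u * κ i := by
    intro i; rw [hudef]
  have hsum_eq : ∑ i, (κ i + s * T) / (1 - 1 / s * T * κ i)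
      = u * ∑ i, ((κ i) ^ 2 + b) / (1 - u * κ i) := by
    simp_rw [hrw, hterm]
    rw [Finset.sum_add_distrib, hsum, add_zero, Finset.mul_sum]
    congr 1; ext i; ring
  rw [hsum_eq]
  -- bound P
  have hPnonneg : ∀ i, 0 ≤ ((κ i) ^ 2 + b) / (1 - u * κ i) := by
    intro i
    exact div_nonneg (by positivity) (hdenpos i).le
  have hP : ∑ i, ((κ i) ^ 2 + b) / (1 - u * κ i) ≤ (Λ ^ 2 + n * b) / d₀ := by
    calc ∑ i, ((κ i) ^ 2 + b) / (1 - u * κ i)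
        ≤ ∑ i, ((κ i) ^ 2 + b) / d₀ := by
          refine Finset.sum_le_sum fun i _ => ?_
          exact div_le_div_of_nonneg_left (by positivity) hd₀pos (hden i)
      _ = (∑ i, ((κ i) ^ 2 + b)) / d₀ := by rw [← Finset.sum_div]
      _ ≤ (Λ ^ 2 + n * b) / d₀ := by
          have hnum : (∑ i, ((κ i) ^ 2 + b)) ≤ Λ ^ 2 + n * b := by
            rw [Finset.sum_add_distrib, Finset.sum_const, Finset.card_univ,
              Fintype.card_fin, nsmul_eq_mul]
            linarith
          exact (div_le_div_iff_of_pos_right hd₀pos).mpr hnum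
  have hP0 : 0 ≤ ∑ i, ((κ i) ^ 2 + b) / (1 - u * κ i) :=
    Finset.sum_nonneg fun i _ => hPnonneg i
  have hu' : u ≤ A / s := (le_abs_self u).trans hu_abs
  have hmain : u * ∑ i, ((κ i) ^ 2 + b) / (1 - u * κ i)
      ≤ (A / s) * ((Λ ^ 2 + n * b) / d₀) :=
    mul_le_mul hu' hP hP0 (by positivity)
  refine hmain.trans (le_of_eq ?_)
  have hpos2 : Real.sqrt c * ε / Λ < s := by
    rw [div_lt_iff₀ hΛ]
    nlinarith [mul_le_mul_of_nonneg_right hscs hε0.le]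
  have hpos2' : (0:ℝ) < s - Real.sqrt c * ε / Λ := by linarith
  have hD : 0 < s * Λ - Real.sqrt c * ε := by
    have := (div_lt_iff₀ hΛ).mp hpos2
    linarith
  have hd₀eq : d₀ = (s * Λ - Real.sqrt c * ε) / (s * Λ) := by
    rw [hd₀def]; field_simp
  have h2 : s - Real.sqrt c * ε / Λ = (s * Λ - Real.sqrt c * ε) / Λ := by
    field_simp
  rw [hAdef, hd₀eq, h2]
  field_simp
end

section
/- Let n ≥ 1 be a natural number, let c > 0 and let τ be a real number with 0 < √c · τ < π/2. Let κ : Fin n → ℝ satisfy ∑ᵢ κᵢ ≥ 0 and (1/√c) · tan(√c · τ) · κᵢ < 1 for every i. Then ∑ᵢ (κᵢ + √c · tan(√c · τ)) / (1 − (1/√c) · tan(√c · τ) · κᵢ) > 0. -/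
/-! Write `a = tan(√c τ)/√c` and `b = √c tan(√c τ)`, both positive. On `{a x < 1}` the map
`x ↦ (x + b)/(1 - a x)` is convex, so it lies above its tangent line `b + (1 + a b) x` at `0`.
Summing, the mean curvature is at least `n b + (1 + a b) ∑ᵢ κᵢ > 0`. -/

open Finset

lemma add_one_add_mul_mul_le_div_one_sub_mul {a b x : ℝ} (ha : 0 ≤ a) (hb : 0 ≤ b)
    (hx : a * x < 1) : b + (1 + a * b) * x ≤ (x + b) / (1 - a * x) := by
  rw [le_div_iff₀ (by linarith)]
  have hgap : 0 ≤ a * (1 + a * b) * x ^ 2 := by positivity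
  nlinarith

lemma sum_div_one_sub_mul_pos {ι : Type*} [Fintype ι] [Nonempty ι] {a b : ℝ} (ha : 0 ≤ a)
    (hb : 0 < b) (κ : ι → ℝ) (hsum : 0 ≤ ∑ i, κ i) (hden : ∀ i, a * κ i < 1) :
    0 < ∑ i, (κ i + b) / (1 - a * κ i) :=
  calc (0 : ℝ) < Fintype.card ι * b + (1 + a * b) * ∑ i, κ i := by positivity
    _ = ∑ i, (b + (1 + a * b) * κ i) := by
      rw [sum_add_distrib, ← mul_sum, sum_const, card_univ, nsmul_eq_mul]
    _ ≤ ∑ i, (κ i + b) / (1 - a * κ i) := sum_le_sum fun i _ =>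
      add_one_add_mul_mul_le_div_one_sub_mul ha hb.le (hden i)

/-- Analytic core of the third step of Lemma 2.1.1: parallel hypersurfaces of a
mean-convex hypersurface are strictly mean-convex. -/
theorem parallel_strictly_mean_convex
    (n : ℕ) (hn : 1 ≤ n) (c τ : ℝ) (hc : 0 < c)
    (hτ0 : 0 < Real.sqrt c * τ) (hτ1 : Real.sqrt c * τ < Real.pi / 2)
    (κ : Fin n → ℝ) (hsum : 0 ≤ ∑ i, κ i)
    (hden : ∀ i, (1 / Real.sqrt c) * Real.tan (Real.sqrt c * τ) * κ i < 1) :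
    0 < ∑ i, (κ i + Real.sqrt c * Real.tan (Real.sqrt c * τ)) /
        (1 - (1 / Real.sqrt c) * Real.tan (Real.sqrt c * τ) * κ i) := by
  have : Nonempty (Fin n) := Fin.pos_iff_nonempty.mp hn
  have hsqrt : 0 < Real.sqrt c := Real.sqrt_pos.mpr hc
  have htan : 0 < Real.tan (Real.sqrt c * τ) := Real.tan_pos_of_pos_of_lt_pi_div_two hτ0 hτ1
  exact sum_div_one_sub_mul_pos (by positivity) (by positivity) κ hsum hden
end
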